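/- In the standard stochastic multi-armed bandit with K machines having reward distributions supported in [0,1] and a unique optimal arm j*, if the UCB1(ε) policy (which at trial t pulls an arm maximizing X̂_j + √((2+ε) ln t / T_j(t-1))) is run, then P(T*(n) < n/K) < 2K^{4+2ε}/n^{2+2ε} for all n such that ⌊n/K⌋ > 4(2+ε) ln n / min_{j≠j*}(μ* - μ_j)², where T*(n) is the number of pulls of the optimal arm in the first n trials. -/

import Mathlib

open MeasureTheory ProbabilityTheory Finset

/-!
If the optimal arm gets fewer than `n/K` of the first `n` pulls, some suboptimal arm `j` gets
more than `ℓ = ⌊n/K⌋`. At the trial `t ≥ K` of its `(ℓ+1)`-th pull, UCB1(ε) preferred `j` to the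
optimal arm, although the gap condition makes twice the exploration bonus of `j` smaller than
`μ* - μ_j`. Hence either the first `ℓ` rewards of `j` overshoot `μ_j` by at least
`√((2+ε) ln(n/K) / ℓ)`, or, for some `m ≤ n`, the first `m` rewards of the optimal arm undershoot
`μ*` by at least `√((2+ε) ln(n/K) / m)`; here `ln(n/K) ≤ ln(t+1)` because `t ≥ ℓ`. By
Hoeffding's inequality each of these `K - 1 + n` events has probability at most
`(n/K)^-(4+2ε)`, and `(K - 1 + n) (K/n)^(4+2ε) < 2 K^(4+2ε) / n^(2+2ε)`.
-/

noncomputable def empMean (x : ℕ → ℝ) (m : ℕ) : ℝ := (∑ s ∈ range m, x s) / m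

noncomputable def confRadius (ε x : ℝ) (m : ℕ) : ℝ := √((2 + ε) * Real.log x / m)

section ConfRadius

variable {ε x y : ℝ} {m : ℕ}

lemma confRadius_nonneg : 0 ≤ confRadius ε x m := Real.sqrt_nonneg _

lemma confRadius_le_confRadius (hε : 0 ≤ ε) (hx : 0 < x) (hxy : x ≤ y) :
    confRadius ε x m ≤ confRadius ε y m := by
  unfold confRadius
  gcongr

lemma two_mul_confRadius_lt {Δ : ℝ} (hΔ : 0 < Δ) (hm : 0 < m)
    (h : 4 * (2 + ε) * Real.log x / Δ ^ 2 < m) : 2 * confRadius ε x m < Δ := by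
  rw [div_lt_iff₀ (by positivity)] at h
  have hsq : (2 + ε) * Real.log x / m < (Δ / 2) ^ 2 := by
    rw [div_lt_iff₀ (by positivity)]
    linarith
  have hsqrt := (Real.sqrt_lt' (by positivity)).2 hsq
  unfold confRadius
  linarith

lemma exp_neg_two_mul_confRadius_sq (hε : 0 ≤ ε) (hx : 1 ≤ x) (hm : 0 < m) :
    Real.exp (-2 * m * confRadius ε x m ^ 2) = (x ^ (4 + 2 * ε))⁻¹ := by
  have hlog := Real.log_nonneg hx
  rw [confRadius, Real.sq_sqrt (by positivity), Real.rpow_def_of_pos (by linarith),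
    ← Real.exp_neg]
  congr 1
  field_simp
  ring

end ConfRadius

lemma measure_biUnion_finset_le_card_mul {α ι : Type*} [MeasurableSpace α] {μ : Measure α}
    (s : Finset ι) (F : ι → Set α) {b : ENNReal} (h : ∀ i ∈ s, μ (F i) ≤ b) :
    μ (⋃ i ∈ s, F i) ≤ #s * b :=
  (measure_biUnion_finset_le s F).trans <| (sum_le_sum h).trans_eq <| by
    rw [sum_const, nsmul_eq_mul]

section Hoeffding

variable {Ω : Type*} [MeasurableSpace Ω] {μ : Measure Ω} [IsProbabilityMeasure μ]

lemma measure_mul_le_sum_range_le {Z : ℕ → Ω → ℝ} (hindep : iIndepFun Z μ)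
    (hZ : ∀ i, HasSubgaussianMGF (Z i) 4⁻¹ μ) {a : ℝ} (ha : 0 ≤ a) (m : ℕ) :
    μ {ω | m * a ≤ ∑ i ∈ range m, Z i ω} ≤ ENNReal.ofReal (Real.exp (-2 * m * a ^ 2)) := by
  rw [← ofReal_measureReal]
  refine ENNReal.ofReal_le_ofReal <| (HasSubgaussianMGF.measure_sum_range_ge_le_of_iIndepFun
    hindep (fun i _ ↦ hZ i) (by positivity)).trans_eq ?_
  rcases eq_or_ne (m : ℝ) 0 with hm | hm
  · simp [hm]
  · congr 1
    push_cast
    field_simp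
    ring

lemma hasSubgaussianMGF_sub_of_mem_unitInterval {Y : Ω → ℝ} {p : ℝ} (hm : AEMeasurable Y μ)
    (hb : ∀ᵐ ω ∂μ, Y ω ∈ Set.Icc 0 1) (hp : μ[Y] = p) :
    HasSubgaussianMGF (fun ω ↦ Y ω - p) 4⁻¹ μ := by
  have h := hasSubgaussianMGF_of_mem_Icc hm hb
  rw [hp] at h
  convert h using 1
  norm_num

variable {Y : ℕ → Ω → ℝ} {p a : ℝ}

lemma measure_add_le_empMean_le (hindep : iIndepFun Y μ) (hmeas : ∀ i, AEMeasurable (Y i) μ)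
    (hb : ∀ i, ∀ᵐ ω ∂μ, Y i ω ∈ Set.Icc 0 1) (hp : ∀ i, μ[Y i] = p) (ha : 0 ≤ a) (m : ℕ) :
    μ {ω | p + a ≤ empMean (Y · ω) m} ≤ ENNReal.ofReal (Real.exp (-2 * m * a ^ 2)) := by
  refine (measure_mono fun ω hω ↦ ?_).trans <| measure_mul_le_sum_range_le
    (hindep.comp (fun _ x ↦ x - p) fun _ ↦ measurable_sub_const p)
    (fun i ↦ hasSubgaussianMGF_sub_of_mem_unitInterval (hmeas i) (hb i) (hp i)) ha m
  rcases Nat.eq_zero_or_pos m with rfl | hm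
  · simp
  · simp only [Set.mem_ofPred_eq, empMean, le_div_iff₀ (Nat.cast_pos.2 hm : (0 : ℝ) < m)] at hω
    simp only [Set.mem_ofPred_eq, Function.comp_apply, sum_sub_distrib, sum_const, card_range,
      nsmul_eq_mul]
    linarith

lemma measure_empMean_le_sub_le (hindep : iIndepFun Y μ) (hmeas : ∀ i, AEMeasurable (Y i) μ)
    (hb : ∀ i, ∀ᵐ ω ∂μ, Y i ω ∈ Set.Icc 0 1) (hp : ∀ i, μ[Y i] = p) (ha : 0 ≤ a) (m : ℕ) :
    μ {ω | empMean (Y · ω) m ≤ p - a} ≤ ENNReal.ofReal (Real.exp (-2 * m * a ^ 2)) := by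
  refine (measure_mono fun ω hω ↦ ?_).trans <| measure_mul_le_sum_range_le
    (hindep.comp (fun _ x ↦ -(x - p)) fun _ ↦ (measurable_sub_const p).neg)
    (fun i ↦ (hasSubgaussianMGF_sub_of_mem_unitInterval (hmeas i) (hb i) (hp i)).neg) ha m
  rcases Nat.eq_zero_or_pos m with rfl | hm
  · simp
  · simp only [Set.mem_ofPred_eq, empMean, div_le_iff₀ (Nat.cast_pos.2 hm : (0 : ℝ) < m)] at hω
    simp only [Set.mem_ofPred_eq, Function.comp_apply, sum_neg_distrib, sum_sub_distrib, sum_const,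
      card_range, nsmul_eq_mul]
    linarith

lemma measure_ucb_deviation_le {K : ℕ} {X : Fin K → ℕ → Ω → ℝ} {μs : Fin K → ℝ}
    (hindep : ∀ j, iIndepFun (X j) μ) (hmeas : ∀ j s, AEMeasurable (X j s) μ)
    (hbdd : ∀ j s, ∀ᵐ ω ∂μ, X j s ω ∈ Set.Icc 0 1) (hmean : ∀ j s, μ[X j s] = μs j)
    (jstar : Fin K) {ε : ℝ} (hε : 0 ≤ ε) {n : ℕ} (hℓ : 1 ≤ n / K) :
    μ ((⋃ j ∈ univ.erase jstar,
        {ω | μs j + confRadius ε (n / K) (n / K) ≤ empMean (X j · ω) (n / K)}) ∪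
      ⋃ m ∈ Icc 1 n, {ω | empMean (X jstar · ω) m ≤ μs jstar - confRadius ε (n / K) m}) ≤
      ENNReal.ofReal ((K - 1 + n : ℕ) * ((n / K : ℝ) ^ (4 + 2 * ε))⁻¹) := by
  have hnK : (1 : ℝ) ≤ n / K := le_trans (by exact_mod_cast hℓ) Nat.cast_div_le
  set B := ((n / K : ℝ) ^ (4 + 2 * ε))⁻¹
  have hupper : ∀ j ∈ univ.erase jstar, μ {ω | μs j + confRadius ε (n / K) (n / K) ≤
      empMean (X j · ω) (n / K)} ≤ ENNReal.ofReal B := fun j _ ↦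
    (measure_add_le_empMean_le (hindep j) (hmeas j) (hbdd j) (hmean j) confRadius_nonneg
      _).trans_eq (by rw [exp_neg_two_mul_confRadius_sq hε hnK hℓ])
  have hlower : ∀ m ∈ Icc 1 n, μ {ω | empMean (X jstar · ω) m ≤
      μs jstar - confRadius ε (n / K) m} ≤ ENNReal.ofReal B := fun m hm ↦
    (measure_empMean_le_sub_le (hindep jstar) (hmeas jstar) (hbdd jstar) (hmean jstar)
      confRadius_nonneg m).trans_eq
      (by rw [exp_neg_two_mul_confRadius_sq hε hnK (mem_Icc.1 hm).1])
  calc _ ≤ _ := measure_union_le _ _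
    _ ≤ #(univ.erase jstar) * ENNReal.ofReal B + #(Icc 1 n) * ENNReal.ofReal B :=
      add_le_add (measure_biUnion_finset_le_card_mul _ _ hupper)
        (measure_biUnion_finset_le_card_mul _ _ hlower)
    _ = ENNReal.ofReal ((K - 1 + n : ℕ) * B) := by
      rw [← add_mul, card_erase_of_mem (mem_univ _), card_univ, Fintype.card_fin, Nat.card_Icc,
        Nat.add_sub_cancel, ENNReal.ofReal_mul (Nat.cast_nonneg _), ENNReal.ofReal_natCast]
      norm_cast

end Hoeffding

lemma Finset.exists_ne_sum_div_card_lt {ι : Type*} [Fintype ι] [DecidableEq ι] {f : ι → ℝ}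
    {i₀ : ι} (h : f i₀ < (∑ i, f i) / Fintype.card ι) :
    ∃ i ≠ i₀, (∑ i, f i) / Fintype.card ι < f i := by
  set S := ∑ i, f i
  have hK : 0 < Fintype.card ι := Fintype.card_pos_iff.2 ⟨i₀⟩
  have hlt : ∑ _i ∈ univ.erase i₀, S / Fintype.card ι < ∑ i ∈ univ.erase i₀, f i := by
    rw [sum_const, card_erase_of_mem (mem_univ i₀), card_univ, nsmul_eq_mul,
      Nat.cast_pred hK, sum_erase_eq_sub (mem_univ i₀)]
    have : (Fintype.card ι - 1 : ℝ) * (S / Fintype.card ι) = S - S / Fintype.card ι := by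
      field_simp
    linarith
  obtain ⟨i, hi, hlt⟩ := exists_lt_of_sum_lt hlt
  exact ⟨i, ne_of_mem_erase hi, hlt⟩

lemma Nat.sum_count_eq {ι : Type*} [Fintype ι] [DecidableEq ι] (arms : ℕ → ι) (t : ℕ) :
    ∑ j, Nat.count (arms · = j) t = t := by
  simp only [Nat.count_eq_card_filter_range]
  rw [← card_eq_sum_card_fiberwise (fun _ _ ↦ mem_univ _), card_range]

lemma Nat.exists_count_eq_of_lt_count {p : ℕ → Prop} [DecidablePred p] {ℓ n : ℕ}
    (h : ℓ < Nat.count p n) : ∃ t < n, p t ∧ Nat.count p t = ℓ := by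
  have hcard : ∀ hf : (Set.ofPred p).Finite, ℓ < #hf.toFinset :=
    fun hf ↦ h.trans_le (Nat.count_le_card hf n)
  exact ⟨Nat.nth p ℓ, Nat.nth_lt_of_lt_count h, Nat.nth_mem ℓ hcard, Nat.count_nth hcard⟩

section Path

variable {K : ℕ} {arms : ℕ → Fin K} {x : Fin K → ℕ → ℝ} {μs : Fin K → ℝ} {jstar : Fin K}
  {ε : ℝ} {n : ℕ}

lemma one_le_div_of_gap_condition (hε : 0 ≤ ε) {j : Fin K}
    (hcond : 4 * (2 + ε) * Real.log n / (μs jstar - μs j) ^ 2 < ((n / K : ℕ) : ℝ)) :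
    1 ≤ n / K := by
  have hlog := Real.log_natCast_nonneg n
  have hnonneg : (0 : ℝ) ≤ 4 * (2 + ε) * Real.log n / (μs jstar - μs j) ^ 2 := by positivity
  exact_mod_cast hnonneg.trans_lt hcond

lemma count_pos_of_roundRobin (hinit : ∀ t (h : t < K), arms t = ⟨t, h⟩) {t : ℕ}
    (ht : K ≤ t) (j : Fin K) : 0 < Nat.count (arms · = j) t :=
  Nat.pos_of_ne_zero <| Nat.count_ne_iff_exists.2 ⟨j, j.2.trans_le ht, hinit j j.2⟩

lemma le_of_roundRobin (hinit : ∀ t (h : t < K), arms t = ⟨t, h⟩) {t : ℕ} {j : Fin K}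
    (hj : arms t = j) (hpos : 0 < Nat.count (arms · = j) t) : K ≤ t := by
  by_contra! htK
  obtain ⟨s, hst, hs⟩ := Nat.count_ne_iff_exists.1 hpos.ne'
  rw [hinit s (hst.trans htK), ← hj, hinit t htK, Fin.mk.injEq] at hs
  exact hst.ne hs

lemma ucb_deviation_of_count_lt (hε : 0 ≤ ε) (hopt : ∀ j, j ≠ jstar → μs j < μs jstar)
    (hinit : ∀ t (h : t < K), arms t = ⟨t, h⟩)
    (hpolicy : ∀ t, K ≤ t → ∀ j : Fin K,
      empMean (x j) (Nat.count (arms · = j) t) +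
          confRadius ε (t + 1) (Nat.count (arms · = j) t) ≤
        empMean (x (arms t)) (Nat.count (arms · = arms t) t) +
          confRadius ε (t + 1) (Nat.count (arms · = arms t) t))
    (hcond : ∀ j, j ≠ jstar →
      4 * (2 + ε) * Real.log n / (μs jstar - μs j) ^ 2 < ((n / K : ℕ) : ℝ))
    (hunder : (Nat.count (arms · = jstar) n : ℝ) < n / K) :
    (∃ j, j ≠ jstar ∧ μs j + confRadius ε (n / K) (n / K) ≤ empMean (x j) (n / K)) ∨
      ∃ m ∈ Icc 1 n, empMean (x jstar) m ≤ μs jstar - confRadius ε (n / K) m := by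
  obtain ⟨j, hj, hover⟩ :=
    exists_ne_sum_div_card_lt (f := fun j ↦ (Nat.count (arms · = j) n : ℝ))
      (by simpa [← Nat.cast_sum, Nat.sum_count_eq] using hunder)
  have hℓ : 1 ≤ n / K := one_le_div_of_gap_condition hε (hcond j hj)
  simp only [← Nat.cast_sum, Nat.sum_count_eq, Fintype.card_fin] at hover
  obtain ⟨t, htn, hat, hcount⟩ := Nat.exists_count_eq_of_lt_count
    (by exact_mod_cast Nat.cast_div_le.trans_lt hover : n / K < Nat.count (arms · = j) n)
  have hKt : K ≤ t := le_of_roundRobin hinit hat (hcount ▸ hℓ)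
  have hpos : 0 < Nat.count (arms · = jstar) t := count_pos_of_roundRobin hinit hKt jstar
  have hnK : (1 : ℝ) ≤ n / K := le_trans (by exact_mod_cast hℓ) Nat.cast_div_le
  have hlo : (n : ℝ) / K ≤ t + 1 := by
    have hfloor := Nat.floor_div_eq_div (K := ℝ) n K ▸ Nat.lt_floor_add_one ((n : ℝ) / K)
    have ht : n / K ≤ t := hcount ▸ Nat.count_le _
    exact hfloor.le.trans (by exact_mod_cast Nat.add_le_add_right ht 1)
  have hgap : 2 * confRadius ε (t + 1) (n / K) < μs jstar - μs j := by
    have hbonus := two_mul_confRadius_lt (sub_pos.2 (hopt j hj)) hℓ (hcond j hj)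
    have hmono := confRadius_le_confRadius (m := n / K) hε (by positivity)
      (show (t : ℝ) + 1 ≤ n by exact_mod_cast htn)
    linarith
  have hpol := hpolicy t hKt jstar
  rw [hat, hcount] at hpol
  rcases le_or_gt (μs j + confRadius ε (n / K) (n / K)) (empMean (x j) (n / K)) with hhigh | hlow
  · exact Or.inl ⟨j, hj, hhigh⟩
  · refine Or.inr ⟨_, mem_Icc.2 ⟨hpos, (Nat.count_le _).trans htn.le⟩, ?_⟩
    have hj_bonus := confRadius_le_confRadius (m := n / K) hε (by linarith) hlo
    have hstar_bonus :=
      confRadius_le_confRadius (m := Nat.count (arms · = jstar) t) hε (by linarith) hlo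
    linarith

end Path

lemma card_mul_inv_rpow_div_lt {K n : ℕ} (hK : 1 ≤ K) (hKn : K ≤ n) (ε : ℝ) :
    ((K - 1 + n : ℕ) : ℝ) * (((n : ℝ) / K) ^ (4 + 2 * ε))⁻¹ <
      2 * (K : ℝ) ^ ((4 : ℝ) + 2 * ε) / (n : ℝ) ^ ((2 : ℝ) + 2 * ε) := by
  have hK0 : (0 : ℝ) < K := by exact_mod_cast hK
  have hn0 : (0 : ℝ) < n := by exact_mod_cast hK.trans hKn
  have hcount : ((K - 1 + n : ℕ) : ℝ) < 2 * (n : ℝ) ^ (2 : ℝ) := by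
    have : (K : ℝ) ≤ n := by exact_mod_cast hKn
    rw [Real.rpow_two]
    push_cast [Nat.cast_sub hK]
    nlinarith
  have hsplit : (n : ℝ) ^ (4 + 2 * ε) = (n : ℝ) ^ ((2 : ℝ) + 2 * ε) * (n : ℝ) ^ (2 : ℝ) := by
    rw [← Real.rpow_add hn0]
    ring_nf
  rw [Real.div_rpow hn0.le hK0.le, inv_div, hsplit, ← mul_div_assoc,
    div_lt_div_iff₀ (by positivity) (by positivity)]
  have : 0 < (K : ℝ) ^ (4 + 2 * ε) * (n : ℝ) ^ ((2 : ℝ) + 2 * ε) := by positivity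
  nlinarith

/-- Trials are indexed from 0, so trial `t` is the `(t+1)`-th trial; `X j s` is the reward of
machine `j` at its `(s+1)`-th pull, `A t` the arm pulled at trial `t`, `T j t` the number of pulls
of arm `j` in the first `t` trials and `Xhat j t` the empirical mean reward of arm `j` after the
first `t` trials. -/
theorem ucb1_eps_high_prob_bound_general
    (Ω : Type*) [MeasurableSpace Ω] (μ : Measure Ω) [IsProbabilityMeasure μ]
    (K : ℕ) (hK : 2 ≤ K) (ε : ℝ) (hε : 0 ≤ ε)
    (X : Fin K → ℕ → Ω → ℝ) (μs : Fin K → ℝ)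
    (hmeas : ∀ j s, Measurable (X j s))
    (hindep : iIndepFun
      (fun (q : Fin K × ℕ) ω => X q.1 q.2 ω) μ)
    (hbdd : ∀ j s ω, X j s ω ∈ Set.Icc (0 : ℝ) 1)
    (hmean : ∀ j s, ∫ ω, X j s ω ∂μ = μs j)
    (jstar : Fin K) (hopt : ∀ j, j ≠ jstar → μs j < μs jstar)
    (A : ℕ → Ω → Fin K)
    (T : Fin K → ℕ → Ω → ℕ)
    (hT : ∀ j t ω, T j t ω = ((Finset.range t).filter (fun t' => A t' ω = j)).card)
    (Xhat : Fin K → ℕ → Ω → ℝ)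
    (hXhat : ∀ j t ω,
      Xhat j t ω = (∑ s ∈ Finset.range (T j t ω), X j s ω) / (T j t ω))
    -- initialization: each arm is pulled once during the first K trials
    (hinit : ∀ ω, ∀ t, (h : t < K) → A t ω = ⟨t, h⟩)
    -- UCB1(ε) policy: the pulled arm maximizes the upper confidence index
    (hpolicy : ∀ ω t, K ≤ t → ∀ j : Fin K,
      Xhat j t ω + Real.sqrt ((2 + ε) * Real.log (t + 1) / (T j t ω)) ≤
        Xhat (A t ω) t ω +
          Real.sqrt ((2 + ε) * Real.log (t + 1) / (T (A t ω) t ω)))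
    (n : ℕ)
    (hcond : ∀ j, j ≠ jstar →
      4 * (2 + ε) * Real.log n / (μs jstar - μs j) ^ 2 < ((n / K : ℕ) : ℝ)) :
    μ {ω | (T jstar n ω : ℝ) < (n : ℝ) / K} <
      ENNReal.ofReal (2 * (K : ℝ) ^ ((4 : ℝ) + 2 * ε) / (n : ℝ) ^ ((2 : ℝ) + 2 * ε)) := by
  have : Nontrivial (Fin K) := Fin.nontrivial_iff_two_le.2 hK
  obtain ⟨j₀, hj₀⟩ := exists_ne jstar
  have hℓ : 1 ≤ n / K := one_le_div_of_gap_condition hε (hcond j₀ hj₀)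
  have hKn : K ≤ n := (Nat.one_le_div_iff (by omega)).1 hℓ
  refine (measure_mono fun ω hω ↦ ?_).trans_lt <| (measure_ucb_deviation_le
    (fun j ↦ hindep.precomp (Prod.mk_right_injective j)) (fun j s ↦ (hmeas j s).aemeasurable)
    (fun j s ↦ ae_of_all _ (hbdd j s)) hmean jstar hε hℓ).trans_lt <|
    (ENNReal.ofReal_lt_ofReal_iff_of_nonneg (by positivity)).2
      (card_mul_inv_rpow_div_lt (by omega) hKn ε)
  have hcount : ∀ j t, T j t ω = Nat.count (A · ω = j) t := by
    simp [hT, Nat.count_eq_card_filter_range]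
  have hXhat_eq : ∀ j t, Xhat j t ω = empMean (X j · ω) (T j t ω) := fun j t ↦ hXhat j t ω
  rcases ucb_deviation_of_count_lt (x := (X · · ω)) hε hopt (hinit ω)
      (by simpa only [confRadius, hXhat_eq, hcount] using hpolicy ω) hcond
      (by simpa [hcount] using hω) with ⟨j, hj, h⟩ | ⟨m, hm, h⟩
  · exact Or.inl (Set.mem_biUnion (mem_erase.2 ⟨hj, mem_univ j⟩) h)
  · exact Or.inr (Set.mem_biUnion hm h)

/-- High probability bound on the number of optimal pulls under the UCB1(ε) policy
(Lemma 1).  Trials are indexed from 0, so trial `t` is the `(t+1)`-th trial;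
`X j s` is the reward of machine `j` at its `(s+1)`-th pull, `A t` the arm pulled at
trial `t`, `T j t` the number of pulls of arm `j` in the first `t` trials and
`Xhat j t` the empirical mean reward of arm `j` after the first `t` trials. -/
theorem ucb1_eps_high_prob_bound
    (Ω : Type*) [MeasurableSpace Ω] (μ : Measure Ω) [IsProbabilityMeasure μ]
    (K : ℕ) (hK : 2 ≤ K) (ε : ℝ) (hε : 0 ≤ ε)
    (X : Fin K → ℕ → Ω → ℝ) (μs : Fin K → ℝ)
    (hmeas : ∀ j s, Measurable (X j s))
    (hindep : iIndepFun
      (fun (q : Fin K × ℕ) ω => X q.1 q.2 ω) μ)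
    (hident : ∀ j s, IdentDistrib (X j s) (X j 0) μ μ)
    (hbdd : ∀ j s ω, X j s ω ∈ Set.Icc (0 : ℝ) 1)
    (hmean : ∀ j s, ∫ ω, X j s ω ∂μ = μs j)
    (jstar : Fin K) (hopt : ∀ j, j ≠ jstar → μs j < μs jstar)
    (A : ℕ → Ω → Fin K)
    (T : Fin K → ℕ → Ω → ℕ)
    (hT : ∀ j t ω, T j t ω = ((Finset.range t).filter (fun t' => A t' ω = j)).card)
    (Xhat : Fin K → ℕ → Ω → ℝ)
    (hXhat : ∀ j t ω,
      Xhat j t ω = (∑ s ∈ Finset.range (T j t ω), X j s ω) / (T j t ω))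
    -- initialization: each arm is pulled once during the first K trials
    (hinit : ∀ ω, ∀ t, (h : t < K) → A t ω = ⟨t, h⟩)
    -- UCB1(ε) policy: the pulled arm maximizes the upper confidence index
    (hpolicy : ∀ ω t, K ≤ t → ∀ j : Fin K,
      Xhat j t ω + Real.sqrt ((2 + ε) * Real.log (t + 1) / (T j t ω)) ≤
        Xhat (A t ω) t ω +
          Real.sqrt ((2 + ε) * Real.log (t + 1) / (T (A t ω) t ω)))
    (n : ℕ) (hn : 1 ≤ n)
    (hcond : ∀ j, j ≠ jstar →
      4 * (2 + ε) * Real.log n / (μs jstar - μs j) ^ 2 < ((n / K : ℕ) : ℝ)) :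
    μ {ω | (T jstar n ω : ℝ) < (n : ℝ) / K} <
      ENNReal.ofReal (2 * (K : ℝ) ^ ((4 : ℝ) + 2 * ε) / (n : ℝ) ^ ((2 : ℝ) + 2 * ε)) :=
  ucb1_eps_high_prob_bound_general Ω μ K hK ε hε X μs hmeas hindep hbdd hmean jstar hopt A T hT Xhat
    hXhat hinit hpolicy n hcond
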